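/- arXiv:math/0611528 — 3 statements merged into one kernel-verified Lean document; each statement's English description precedes it below -/
import Mathlib

section
/- Let T = (T_0, T_1, …) be an extended D-connection for a B-derivation D: A → F. Define h_0 := id_A and h_i(a) := (1/i)·T_{i-1}(D(a)) ∈ S^i(F) for i ≥ 1 (via the quotient R^i(F) → S^i(F)). Then h = (h_0, h_1, …): A → Π_{i≥0} S^i(F) is a B-algebra homomorphism into the completed symmetric algebra; i.e., h_i(ab) = Σ_{j=0}^{i} h_j(a)·h_{i-j}(b) for all a, b ∈ A and all i ≥ 0. In particular, h is a Hasse derivation of F extending D. -/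
open scoped TensorProduct

noncomputable section

variable (A : Type) [CommRing A]
variable (F : Type) [AddCommGroup F] [Module A F]

/-- `n`-fold tensor power `T^n(F)`. -/
abbrev TPow (n : ℕ) := PiTensorProduct A (fun _ : Fin n => F)

/-- The submodule of symmetry relations. -/
def symRel (n : ℕ) : Submodule A (TPow A F n) :=
  Submodule.span A
    {x | ∃ (m : Fin n → F) (e : Equiv.Perm (Fin n)),
      x = PiTensorProduct.tprod A m - PiTensorProduct.tprod A (m ∘ e)}

/-- Symmetric power `S^n(F)`. -/
abbrev SymPow (n : ℕ) := TPow A F n ⧸ symRel A F n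

/-- Class of the word `m₀ ⋯ m_{n-1}` in `S^n(F)`. -/
def mkS {n : ℕ} (m : Fin n → F) : SymPow A F n :=
  Submodule.Quotient.mk (PiTensorProduct.tprod A m)

/-- Class of a list of elements of `F` in the symmetric power. -/
def mkSL (l : List F) : SymPow A F l.length := mkS A F l.get

/-- `RPow A F n` is `R^{n+1}(F) = S^n(F) ⊗_A F`. -/
abbrev RPow (n : ℕ) := SymPow A F n ⊗[A] F

/-- Class of the word `m₀ ⋯ m_n` in `R^{n+1}(F) = S^n(F) ⊗ F`. -/
def mkR {n : ℕ} (m : Fin (n + 1) → F) : RPow A F n :=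
  mkS A F (fun i : Fin n => m i.castSucc) ⊗ₜ[A] m (Fin.last n)

/-- The `i`-th "rotation" of the word `m` appearing in the definition of the
switch operator: `m_n m_{n-1} ⋯ m_{n-i+1} m_0 m_1 ⋯ m_{n-i}` (0-indexed). -/
def rot {n : ℕ} (m : Fin (n + 1) → F) (i : ℕ) : Fin (n + 1) → F := fun j =>
  if j.val < i then m ⟨n - j.val, by have := j.isLt; omega⟩
  else m ⟨j.val - i, by have := j.isLt; omega⟩

/-- `σ` is the switch operator on `R^{n+1}(F)`:
`σ(m_0⋯m_n) = ∑_{i=1}^{n} m_n m_{n-1}⋯m_{n-i+1} m_0 m_1 ⋯ m_{n-i}`. -/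
def IsSwitch (n : ℕ) (σ : RPow A F n →ₗ[A] RPow A F n) : Prop :=
  ∀ m : Fin (n + 1) → F,
    σ (mkR A F m) = ∑ i ∈ Finset.Icc 1 n, mkR A F (rot F m i)

/-- `K^{n+1}(F) = σ*(R^{n+1}(F))`, described by its generators `σ*(m_0⋯m_n)`. -/
def KSub (n : ℕ) : Submodule A (RPow A F n) :=
  Submodule.span A
    {x | ∃ m : Fin (n + 1) → F,
      x = mkR A F m + ∑ i ∈ Finset.Icc 1 n, mkR A F (rot F m i)}

/-- `K²(F) ⊆ T²(F) = F ⊗ F`: the kernel of `T²(F) → Λ²(F)`, i.e. the image of `1 + σ`. -/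
def K2Sub : Submodule A (F ⊗[A] F) :=
  Submodule.span A {x | ∃ u v : F, x = u ⊗ₜ[A] v + v ⊗ₜ[A] u}

/-- The word `m₀ ⋯ m_{p-1} u m'₀ ⋯ m'_{q-1}`. -/
def joinWord {p q : ℕ} (m : Fin p → F) (u : F) (m' : Fin q → F) :
    Fin (p + q + 1) → F := fun j =>
  if h : j.val < p then m ⟨j.val, h⟩
  else if _h2 : j.val < p + 1 then u
  else m' ⟨j.val - (p + 1), by have := j.isLt; omega⟩

/-- The concatenated word `m₀ ⋯ m_{p-1} m'₀ ⋯ m'_{q-1}`. -/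
def appendWord {p q : ℕ} (m : Fin p → F) (m' : Fin q → F) : Fin (p + q) → F := fun j =>
  if h : j.val < p then m ⟨j.val, h⟩
  else m' ⟨j.val - p, by have := j.isLt; omega⟩

/-- `mul` is the multiplication `R^{p+1}(F) × R^{q+1}(F) → R^{p+q+2}(F)` of the graded
algebra `R(F)`, recorded with values in `∏ₖ R^{k+1}(F)`:
`(s ⊗ u)·(s' ⊗ v) = (s u s') ⊗ v`. -/
def IsMulR (mul : ∀ p q, RPow A F p →ₗ[A] RPow A F q →ₗ[A] ∀ k, RPow A F k) : Prop :=
  ∀ (p q : ℕ) (m : Fin p → F) (u : F) (m' : Fin q → F) (v : F),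
    mul p q (mkS A F m ⊗ₜ[A] u) (mkS A F m' ⊗ₜ[A] v)
      = Pi.single (p + q + 1) (mkS A F (joinWord F m u m') ⊗ₜ[A] v)

/-- `mul` is the multiplication `S^p(F) × S^q(F) → S^{p+q}(F)` of the symmetric algebra,
recorded with values in `∏ₖ S^k(F)`. -/
def IsMulS (mul : ∀ p q, SymPow A F p →ₗ[A] SymPow A F q →ₗ[A] ∀ k, SymPow A F k) : Prop :=
  ∀ (p q : ℕ) (m : Fin p → F) (m' : Fin q → F),
    mul p q (mkS A F m) (mkS A F m') = Pi.single (p + q) (mkS A F (appendWord F m m'))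

/-- `π` is the family of natural maps `R^{n+1}(F) = S^n(F) ⊗ F → S^{n+1}(F)`. -/
def IsPi (π : ∀ n, RPow A F n →ₗ[A] SymPow A F (n + 1)) : Prop :=
  ∀ (n : ℕ) (m : Fin n → F) (v : F),
    π n (mkS A F m ⊗ₜ[A] v) = mkS A F (Fin.snoc m v)

/-- `T = (T₀, T₁, …)` is a (full) extended `D`-connection:  `T₀ = id_F` (under
`F ≅ R¹(F)`), and `T_i(am) = a T_i(m) + ∑_{j=1}^i (1/j) T_{j-1}(D a) T_{i-j}(m)`. -/
def IsExtConn [Algebra ℚ A] (D : A → F)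
    (mul : ∀ p q, RPow A F p →ₗ[A] RPow A F q →ₗ[A] ∀ k, RPow A F k)
    (T : ∀ i, F →+ RPow A F i) : Prop :=
  (∀ m : F, T 0 m = mkS A F (fun i : Fin 0 => i.elim0) ⊗ₜ[A] m) ∧
  ∀ (i : ℕ), 1 ≤ i → ∀ (a : A) (m : F),
    Pi.single i (T i (a • m))
      = Pi.single i (a • T i m)
        + ∑ j ∈ Finset.Icc 1 i,
            algebraMap ℚ A (1 / (j : ℚ)) •
              mul (j - 1) (i - j) (T (j - 1) (D a)) (T (i - j) m)

/-- `T = (T₀, …, T_N)` is an extended `D`-connection up to order `N`. -/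
def IsExtConnTo [Algebra ℚ A] (D : A → F)
    (mul : ∀ p q, RPow A F p →ₗ[A] RPow A F q →ₗ[A] ∀ k, RPow A F k)
    (N : ℕ) (T : ∀ i, F →+ RPow A F i) : Prop :=
  (∀ m : F, T 0 m = mkS A F (fun i : Fin 0 => i.elim0) ⊗ₜ[A] m) ∧
  ∀ (i : ℕ), 1 ≤ i → i ≤ N → ∀ (a : A) (m : F),
    Pi.single i (T i (a • m))
      = Pi.single i (a • T i m)
        + ∑ j ∈ Finset.Icc 1 i,
            algebraMap ℚ A (1 / (j : ℚ)) •
              mul (j - 1) (i - j) (T (j - 1) (D a)) (T (i - j) m)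

/-- The wedge map `F ⊗_A F →  Λ(F)`, `u ⊗ v ↦ u ∧ v`; an element of `F ⊗ F` maps to
zero in `Λ²(F)` iff its image under this map is zero. -/
def wedgeMap : F ⊗[A] F →ₗ[A] ExteriorAlgebra A F :=
  TensorProduct.lift
    ((LinearMap.mul A (ExteriorAlgebra A F)).compl₁₂ (ExteriorAlgebra.ι A) (ExteriorAlgebra.ι A))

/-!
Write `h_{n+1}(x) = (1/(n+1)) π T_n(D x)`. By the Leibniz rule,
`(n+1) h_{n+1}(ab) = π T_n(a·Db) + π T_n(b·Da)`, and the connection identity expands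
`π T_n(a·m)`. Since `π` is multiplicative and `π T_k(D x) = (k+1) h_{k+1}(x)`, the factors `1/j`
cancel, giving `π T_n(a·Db) = (n+1) a h_{n+1}(b) + ∑_{k<n} (n-k) h_{k+1}(a) h_{n-k}(b)`.
Adding the same expansion with `a` and `b` exchanged and reflecting `k ↦ n-1-k` (using that
`S(F)` is commutative) turns the weights `n-k` and `k+1` into `n+1`, so both sides equal `n+1`
times the degree-`(n+1)` part of `h(a) h(b)`.
-/

lemma appendWord_elim0 {V : Type} {q : ℕ} (m : Fin q → V) :
    appendWord V (fun i : Fin 0 => i.elim0) m = m ∘ finCongr (zero_add q) := by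
  funext i
  simp [appendWord, Fin.cast]

lemma appendWord_comp_finAddFlip {V : Type} {p q : ℕ} (m : Fin p → V) (m' : Fin q → V) :
    appendWord V m' m = appendWord V m m' ∘ finAddFlip := by
  funext i
  refine Fin.addCases (fun j => ?_) (fun j => ?_) i <;>
    simp [appendWord, finAddFlip_apply_castAdd, finAddFlip_apply_natAdd]

lemma snoc_joinWord {V : Type} {p q : ℕ} (m : Fin p → V) (u : V) (m' : Fin q → V) (v : V) :
    Fin.snoc (α := fun _ => V) (joinWord V m u m') v
      = appendWord V (Fin.snoc (α := fun _ => V) m u) (Fin.snoc (α := fun _ => V) m' v) ∘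
          finCongr (by omega) := by
  funext i
  have := i.isLt
  simp only [appendWord, joinWord, Fin.snoc, Fin.castLT, Function.comp_apply, finCongr_apply,
    Fin.val_cast, cast_eq]
  split_ifs <;> grind

section SymmetricAlgebra

variable {A F}

lemma mkS_comp_perm {n : ℕ} (m : Fin n → F) (e : Equiv.Perm (Fin n)) :
    mkS A F (m ∘ e) = mkS A F m :=
  (Submodule.Quotient.eq _).mpr <| by
    simpa only [neg_sub] using (symRel A F n).neg_mem (Submodule.subset_span ⟨m, e, rfl⟩)

lemma single_mkS_comp_equiv {n n' : ℕ} (m : Fin n → F) (e : Fin n' ≃ Fin n) :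
    Pi.single (M := fun k => SymPow A F k) n' (mkS A F (m ∘ e)) = Pi.single n (mkS A F m) := by
  obtain rfl : n' = n := by simpa using Fintype.card_congr e
  rw [mkS_comp_perm]

lemma SymPow.hom_ext {n : ℕ} {M : Type} [AddCommGroup M] [Module A M]
    {f g : SymPow A F n →ₗ[A] M} (hfg : ∀ m : Fin n → F, f (mkS A F m) = g (mkS A F m)) :
    f = g :=
  Submodule.linearMap_qext _ <| PiTensorProduct.ext <| MultilinearMap.ext hfg

lemma RPow.hom_ext {n : ℕ} {M : Type} [AddCommGroup M] [Module A M]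
    {f g : RPow A F n →ₗ[A] M}
    (hfg : ∀ (m : Fin n → F) (u : F), f (mkS A F m ⊗ₜ[A] u) = g (mkS A F m ⊗ₜ[A] u)) :
    f = g :=
  TensorProduct.ext <| SymPow.hom_ext fun m => LinearMap.ext fun u => hfg m u

variable {mulS : ∀ p q, SymPow A F p →ₗ[A] SymPow A F q →ₗ[A] ∀ k, SymPow A F k}

lemma IsMulS.comm (hmulS : IsMulS A F mulS) {p q : ℕ} (x : SymPow A F p) (y : SymPow A F q) :
    mulS p q x y = mulS q p y x := by
  suffices mulS p q = (mulS q p).flip by rw [this, LinearMap.flip_apply]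
  refine SymPow.hom_ext (M := SymPow A F q →ₗ[A] ∀ k, SymPow A F k) fun m => ?_
  refine SymPow.hom_ext fun m' => ?_
  rw [LinearMap.flip_apply, hmulS, hmulS, appendWord_comp_finAddFlip, single_mkS_comp_equiv]

lemma IsMulS.one_mul (hmulS : IsMulS A F mulS) {q : ℕ} (s : SymPow A F q) :
    mulS 0 q (mkS A F (fun i : Fin 0 => i.elim0)) s = Pi.single q s := by
  suffices mulS 0 q (mkS A F (fun i : Fin 0 => i.elim0)) = LinearMap.single A _ q from
    LinearMap.congr_fun this s
  refine SymPow.hom_ext fun m => ?_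
  rw [hmulS, appendWord_elim0, single_mkS_comp_equiv, LinearMap.single_apply]

lemma IsMulS.mul_one (hmulS : IsMulS A F mulS) {p : ℕ} (s : SymPow A F p) :
    mulS p 0 s (mkS A F (fun i : Fin 0 => i.elim0)) = Pi.single p s := by
  rw [hmulS.comm, hmulS.one_mul]

end SymmetricAlgebra

section Projection

variable {A F}
variable {mul : ∀ p q, RPow A F p →ₗ[A] RPow A F q →ₗ[A] ∀ k, RPow A F k}
  {mulS : ∀ p q, SymPow A F p →ₗ[A] SymPow A F q →ₗ[A] ∀ k, SymPow A F k}
  {π : ∀ n, RPow A F n →ₗ[A] SymPow A F (n + 1)}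

def projSym (π : ∀ n, RPow A F n →ₗ[A] SymPow A F (n + 1)) (n : ℕ) :
    (∀ k, RPow A F k) →ₗ[A] ∀ k, SymPow A F k :=
  LinearMap.single A (fun k => SymPow A F k) (n + 1) ∘ₗ π n ∘ₗ LinearMap.proj n

lemma projSym_single (n : ℕ) (x : RPow A F n) :
    projSym π n (Pi.single n x) = Pi.single (n + 1) (π n x) := by
  simp [projSym]

lemma IsPi.projSym_mul (hπ : IsPi A F π) (hmul : IsMulR A F mul) (hmulS : IsMulS A F mulS)
    {p q n : ℕ} (hn : p + q + 1 = n) (x : RPow A F p) (y : RPow A F q) :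
    projSym π n (mul p q x y) = mulS (p + 1) (q + 1) (π p x) (π q y) := by
  subst hn
  suffices (mul p q).compr₂ (projSym π (p + q + 1)) = (mulS (p + 1) (q + 1)).compl₁₂ (π p) (π q) by
    rw [← LinearMap.compr₂_apply, this, LinearMap.compl₁₂_apply]
  refine RPow.hom_ext (M := RPow A F q →ₗ[A] ∀ k, SymPow A F k) fun m u => ?_
  refine RPow.hom_ext fun m' v => ?_
  rw [LinearMap.compr₂_apply, LinearMap.compl₁₂_apply, hmul, projSym_single, hπ, hπ, hπ, hmulS,
    snoc_joinWord, single_mkS_comp_equiv]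

end Projection

lemma sum_range_succ_succ_sub {M : Type*} [AddCommMonoid M] (Φ : ℕ → ℕ → M) (n : ℕ) :
    ∑ j ∈ Finset.range (n + 1 + 1), Φ j (n + 1 - j)
      = ∑ k ∈ Finset.range n, Φ (k + 1) (n - k) + Φ 0 (n + 1) + Φ (n + 1) 0 := by
  rw [Finset.sum_range_succ, Finset.sum_range_succ', Nat.sub_self, Nat.sub_zero]
  simp only [Nat.add_sub_add_right]

section CauchyProduct

variable {A F} {mulS : ∀ p q, SymPow A F p →ₗ[A] SymPow A F q →ₗ[A] ∀ k, SymPow A F k}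

lemma IsMulS.sum_range_reflect (hmulS : IsMulS A F mulS) (u v : ∀ i, SymPow A F i) (n : ℕ) :
    ∑ k ∈ Finset.range n, ((n - k : ℕ) : A) • mulS (k + 1) (n - k) (v (k + 1)) (u (n - k))
      = ∑ k ∈ Finset.range n, ((k + 1 : ℕ) : A) • mulS (k + 1) (n - k) (u (k + 1)) (v (n - k)) := by
  rw [← Finset.sum_range_reflect]
  refine Finset.sum_congr rfl fun k hk => ?_
  have hk := Finset.mem_range.mp hk
  rw [show n - 1 - k + 1 = n - k by omega, show n - (n - 1 - k) = k + 1 by omega, hmulS.comm]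

lemma IsMulS.sum_range_symmetrize (hmulS : IsMulS A F mulS) (u v : ∀ i, SymPow A F i) (n : ℕ) :
    ∑ k ∈ Finset.range n, ((n - k : ℕ) : A) • mulS (k + 1) (n - k) (u (k + 1)) (v (n - k))
      + ∑ k ∈ Finset.range n, ((n - k : ℕ) : A) • mulS (k + 1) (n - k) (v (k + 1)) (u (n - k))
      = ((n + 1 : ℕ) : A) • ∑ k ∈ Finset.range n, mulS (k + 1) (n - k) (u (k + 1)) (v (n - k)) := by
  rw [hmulS.sum_range_reflect u v, ← Finset.sum_add_distrib, Finset.smul_sum]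
  refine Finset.sum_congr rfl fun k hk => ?_
  have hk := Finset.mem_range.mp hk
  rw [show ((n + 1 : ℕ) : A) = ((n - k : ℕ) : A) + ((k + 1 : ℕ) : A) by
    rw [← Nat.cast_add]; congr 1; omega]
  module

end CauchyProduct

lemma algebraMap_one_div_mul_natCast_succ [Algebra ℚ A] (n : ℕ) :
    algebraMap ℚ A (1 / (n + 1 : ℚ)) * ((n + 1 : ℕ) : A) = 1 := by
  rw [← map_natCast (algebraMap ℚ A), ← map_mul, Nat.cast_succ, one_div_mul_cancel (by positivity),
    map_one]

section Connection

variable {A F} [Algebra ℚ A] {D : A → F}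
variable {mul : ∀ p q, RPow A F p →ₗ[A] RPow A F q →ₗ[A] ∀ k, RPow A F k}
  {mulS : ∀ p q, SymPow A F p →ₗ[A] SymPow A F q →ₗ[A] ∀ k, SymPow A F k}
  {π : ∀ n, RPow A F n →ₗ[A] SymPow A F (n + 1)} {T : ∀ i, F →+ RPow A F i}

lemma IsExtConn.single_apply_smul (hT : IsExtConn A F D mul T) (i : ℕ) (a : A) (m : F) :
    Pi.single i (T i (a • m))
      = Pi.single i (a • T i m)
        + ∑ k ∈ Finset.range i, algebraMap ℚ A (1 / (k + 1 : ℚ)) •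
            mul k (i - (k + 1)) (T k (D a)) (T (i - (k + 1)) m) := by
  rcases Nat.eq_zero_or_pos i with rfl | hi
  · simp [hT.1, TensorProduct.tmul_smul]
  · rw [hT.2 i hi, ← Finset.Ico_add_one_right_eq_Icc, Finset.sum_Ico_eq_sum_range]
    refine congrArg _ (Finset.sum_congr rfl fun k _ => ?_)
    rw [add_comm 1 k, Nat.add_sub_cancel, Nat.cast_add, Nat.cast_one]

variable {h : ∀ i, A →+ SymPow A F i}

lemma pi_T_eq_natCast_smul
    (hhsucc : ∀ (i : ℕ) (a : A), h (i + 1) a = algebraMap ℚ A (1 / (i + 1 : ℚ)) • π i (T i (D a)))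
    (k : ℕ) (a : A) : π k (T k (D a)) = ((k + 1 : ℕ) : A) • h (k + 1) a := by
  rw [hhsucc, smul_smul, mul_comm, algebraMap_one_div_mul_natCast_succ, one_smul]

lemma single_pi_T_smul (hT : IsExtConn A F D mul T) (hmul : IsMulR A F mul) (hπ : IsPi A F π)
    (hmulS : IsMulS A F mulS)
    (hhsucc : ∀ (i : ℕ) (a : A), h (i + 1) a = algebraMap ℚ A (1 / (i + 1 : ℚ)) • π i (T i (D a)))
    (n : ℕ) (a b : A) :
    Pi.single (n + 1) (π n (T n (a • D b)))
      = ((n + 1 : ℕ) : A) • a • Pi.single (n + 1) (h (n + 1) b)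
        + ∑ k ∈ Finset.range n,
            ((n - k : ℕ) : A) • mulS (k + 1) (n - k) (h (k + 1) a) (h (n - k) b) := by
  have law := congrArg (projSym π n) (hT.single_apply_smul n a (D b))
  rw [projSym_single, map_add, projSym_single, map_sum] at law
  rw [law, map_smul, pi_T_eq_natCast_smul hhsucc, Pi.single_smul (f := fun k => SymPow A F k),
    Pi.single_smul (f := fun k => SymPow A F k), smul_comm a]
  refine congrArg _ (Finset.sum_congr rfl fun k hk => ?_)
  have hkn : n - (k + 1) + 1 = n - k := by
    have := Finset.mem_range.mp hk
    omega
  rw [map_smul, hπ.projSym_mul hmul hmulS (by omega), pi_T_eq_natCast_smul hhsucc,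
    pi_T_eq_natCast_smul hhsucc, hkn, map_smul, LinearMap.map_smul₂, smul_smul, smul_smul]
  congr 1
  linear_combination ((n - k : ℕ) : A) * algebraMap_one_div_mul_natCast_succ A k

lemma single_succ_apply_mul (hD : ∀ a b : A, D (a * b) = a • D b + b • D a)
    (hT : IsExtConn A F D mul T) (hmul : IsMulR A F mul) (hπ : IsPi A F π)
    (hmulS : IsMulS A F mulS)
    (hhsucc : ∀ (i : ℕ) (a : A), h (i + 1) a = algebraMap ℚ A (1 / (i + 1 : ℚ)) • π i (T i (D a)))
    (n : ℕ) (a b : A) :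
    Pi.single (n + 1) (h (n + 1) (a * b))
      = a • Pi.single (n + 1) (h (n + 1) b) + b • Pi.single (n + 1) (h (n + 1) a)
        + ∑ k ∈ Finset.range n, mulS (k + 1) (n - k) (h (k + 1) a) (h (n - k) b) := by
  set c := algebraMap ℚ A (1 / (n + 1 : ℚ))
  calc Pi.single (n + 1) (h (n + 1) (a * b))
      = c • (Pi.single (n + 1) (π n (T n (a • D b)))
          + Pi.single (n + 1) (π n (T n (b • D a)))) := by
        rw [hhsucc, hD, map_add, map_add, Pi.single_smul (f := fun k => SymPow A F k),
          Pi.single_add]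
    _ = c • (((n + 1 : ℕ) : A) • (a • Pi.single (n + 1) (h (n + 1) b)
            + b • Pi.single (n + 1) (h (n + 1) a))
          + (∑ k ∈ Finset.range n,
              ((n - k : ℕ) : A) • mulS (k + 1) (n - k) (h (k + 1) a) (h (n - k) b)
            + ∑ k ∈ Finset.range n,
              ((n - k : ℕ) : A) • mulS (k + 1) (n - k) (h (k + 1) b) (h (n - k) a))) := by
        rw [single_pi_T_smul hT hmul hπ hmulS hhsucc, single_pi_T_smul hT hmul hπ hmulS hhsucc]
        module
    _ = a • Pi.single (n + 1) (h (n + 1) b) + b • Pi.single (n + 1) (h (n + 1) a)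
          + ∑ k ∈ Finset.range n, mulS (k + 1) (n - k) (h (k + 1) a) (h (n - k) b) := by
        rw [hmulS.sum_range_symmetrize (fun i => h i a) (fun i => h i b)]
        linear_combination (norm := module) algebraMap_one_div_mul_natCast_succ A n •
          (a • Pi.single (n + 1) (h (n + 1) b) + b • Pi.single (n + 1) (h (n + 1) a)
            + ∑ k ∈ Finset.range n, mulS (k + 1) (n - k) (h (k + 1) a) (h (n - k) b))

end Connection

theorem hasse_from_extConn [Algebra ℚ A] (B : Type) [CommRing B] [Algebra B A]
    [Module B F]
    (D : Derivation B A F)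
    (mul : ∀ p q, RPow A F p →ₗ[A] RPow A F q →ₗ[A] ∀ k, RPow A F k)
    (hmul : IsMulR A F mul)
    (T : ∀ i, F →+ RPow A F i)
    (hT : IsExtConn A F (⇑D) mul T)
    (π : ∀ n, RPow A F n →ₗ[A] SymPow A F (n + 1))
    (hπ : IsPi A F π)
    (mulS : ∀ p q, SymPow A F p →ₗ[A] SymPow A F q →ₗ[A] ∀ k, SymPow A F k)
    (hmulS : IsMulS A F mulS)
    (h : ∀ i, A →+ SymPow A F i)
    (hh0 : ∀ a : A, h 0 a = a • mkS A F (fun i : Fin 0 => i.elim0))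
    (hhsucc : ∀ (i : ℕ) (a : A),
      h (i + 1) a = algebraMap ℚ A (1 / (i + 1 : ℚ)) • π i (T i (D a))) :
    (∀ (a b : A) (i : ℕ),
        Pi.single i (h i (a * b))
          = ∑ j ∈ Finset.range (i + 1), mulS j (i - j) (h j a) (h (i - j) b))
    ∧ (∀ a : A, h 1 a = mkS A F ![D a]) := by
  refine ⟨fun a b i => ?_, fun a => ?_⟩
  · rcases i with _ | n
    · rw [Finset.sum_range_one, Nat.sub_self, hh0, hh0, hh0, map_smul, LinearMap.map_smul₂,
        hmulS.one_mul, Pi.single_smul (f := fun k => SymPow A F k), mul_comm, mul_smul]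
    rw [single_succ_apply_mul D.leibniz hT hmul hπ hmulS hhsucc,
      sum_range_succ_succ_sub (fun p q => mulS p q (h p a) (h q b)), hh0, hh0, map_smul,
      LinearMap.smul_apply, hmulS.one_mul, map_smul, hmulS.mul_one]
    abel
  · rw [hhsucc 0 a, hT.1, hπ, show (1 / ((0 : ℕ) + 1 : ℚ)) = 1 by simp, map_one, one_smul]
    congr 1
    funext i
    fin_cases i
    rfl

end
end

section
/- (Uniqueness of the comparison automorphism.) Let D: A → F be a B-derivation such that ν∘D ≠ 0 for every nonzero A-linear map ν: F → Ŝ(F). Let h, h' be Hasse derivations of F extending D, and suppose φ, ψ are A-algebra endomorphisms of Ŝ(F) = Π_i S^i(F), each with graded degree-0 component equal to the identity and negative-degree components zero, such that h' = φ∘h = ψ∘h. Then φ = ψ. -/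
open scoped TensorProduct

noncomputable section

variable (A : Type) [CommRing A]
variable (F : Type) [AddCommGroup F] [Module A F]

/-- `Φ` is (the family of graded components of) an `A`-algebra endomorphism of the
completed symmetric algebra `Ŝ(F) = ∏ᵢ S^i(F)` whose degree-`0` component is the
identity (and whose negative-degree components vanish, there being none). -/
def IsEndoComp
    (mulS : ∀ p q, SymPow A F p →ₗ[A] SymPow A F q →ₗ[A] ∀ k, SymPow A F k)
    (Φ : ∀ q p, SymPow A F p →ₗ[A] SymPow A F (p + q)) : Prop :=
  (∀ p, Φ 0 p = LinearMap.id)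
  ∧ (∀ q, 0 < q → Φ q 0 = 0)
  ∧ (∀ (q p p' : ℕ) (m : Fin p → F) (m' : Fin p' → F),
      Pi.single (p + p' + q) (Φ q (p + p') (mkS A F (appendWord F m m')))
        = ∑ x ∈ Finset.HasAntidiagonal.antidiagonal q,
            mulS (p + x.1) (p' + x.2) (Φ x.1 p (mkS A F m)) (Φ x.2 p' (mkS A F m')))

/-- `Φ` carries the Hasse derivation `h` to `h'`: `h' = φ ∘ h`. -/
def Transports (Φ : ∀ q p, SymPow A F p →ₗ[A] SymPow A F (p + q))
    (h h' : ∀ i, A →+ SymPow A F i) : Prop :=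
  ∀ (a : A) (k : ℕ),
    Pi.single k (h' k a)
      = ∑ j ∈ Finset.range (k + 1), Pi.single (j + (k - j)) (Φ (k - j) j (h j a))

/-- `h` is a Hasse derivation of `F` extending `D`: a `B`-algebra homomorphism
`A → ∏ᵢ S^i(F)` with `h₀ = id_A` and `h₁ = D` (under `F ≅ S¹(F)`). -/
def IsHasse (B : Type) [CommRing B] [Algebra B A]
    (D : A → F)
    (mulS : ∀ p q, SymPow A F p →ₗ[A] SymPow A F q →ₗ[A] ∀ k, SymPow A F k)
    (h : ∀ i, A →+ SymPow A F i) : Prop :=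
  (∀ a : A, h 0 a = a • mkS A F (fun i : Fin 0 => i.elim0))
  ∧ (∀ (a b : A) (k : ℕ),
      Pi.single k (h k (a * b))
        = ∑ j ∈ Finset.range (k + 1), mulS j (k - j) (h j a) (h (k - j) b))
  ∧ (∀ (b : B) (k : ℕ), 1 ≤ k → h k (algebraMap B A b) = 0)
  ∧ (∀ a : A, h 1 a = mkS A F ![D a])

/-! The graded components `φ_q` are determined degree by degree. Comparing the degree-`q+1`
components of `φ ∘ h` and `ψ ∘ h`, all terms except `φ_q ∘ h₁ = φ_q ∘ D` involve only lower
components, so `φ_q` and `ψ_q` agree on the image of `D`, hence on `S¹(F)` by the hypothesis on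
`D`. Multiplicativity then propagates the agreement from `S¹(F)` to every `S^p(F)`. -/

theorem Finset.eq_of_sum_eq_sum_of_forall_ne {ι M : Type*} [AddCommGroup M] {s : Finset ι}
    {f g : ι → M} {i : ι} (hi : i ∈ s) (hsum : ∑ j ∈ s, f j = ∑ j ∈ s, g j)
    (hne : ∀ j ∈ s, j ≠ i → f j = g j) : f i = g i := by
  classical
  rw [← Finset.add_sum_erase s f hi, ← Finset.add_sum_erase s g hi,
    Finset.sum_congr rfl fun j hj => hne j (Finset.mem_of_mem_erase hj)
      (Finset.ne_of_mem_erase hj)] at hsum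
  exact add_right_cancel hsum

theorem appendWord_init_last {α : Type} {p : ℕ} (m : Fin (p + 1) → α) :
    appendWord α (fun i : Fin p => m i.castSucc) (fun _ : Fin 1 => m (Fin.last p)) = m := by
  funext j
  simp only [appendWord]
  split_ifs
  · rfl
  · exact congrArg m (Fin.ext (by simp only [Fin.val_last]; omega))

def toSymPowOne : F →ₗ[A] SymPow A F 1 :=
  (symRel A F 1).mkQ ∘ₗ
    ((PiTensorProduct.subsingletonEquiv (0 : Fin 1) : TPow A F 1 ≃ₗ[A] F).symm :
      F →ₗ[A] TPow A F 1)

section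

variable {A F}

theorem toSymPowOne_apply (m : F) : toSymPowOne A F m = mkS A F ![m] := by
  have : (PiTensorProduct.subsingletonEquiv (0 : Fin 1) : TPow A F 1 ≃ₗ[A] F).symm m =
      PiTensorProduct.tprod A ![m] := by
    rw [LinearEquiv.symm_apply_eq, PiTensorProduct.subsingletonEquiv_apply_tprod]
    rfl
  exact congrArg (symRel A F 1).mkQ this

theorem mkS_fin_one (m : Fin 1 → F) : mkS A F m = toSymPowOne A F (m 0) := by
  rw [toSymPowOne_apply]
  congr 1
  funext i
  fin_cases i
  rfl

theorem symPow_hom_ext {n : ℕ} {M : Type} [AddCommGroup M] [Module A M]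
    {f g : SymPow A F n →ₗ[A] M} (H : ∀ m : Fin n → F, f (mkS A F m) = g (mkS A F m)) :
    f = g := by
  rw [← LinearMap.cancel_right (Submodule.mkQ_surjective (symRel A F n))]
  exact PiTensorProduct.ext (MultilinearMap.ext H)

theorem symPowOne_hom_ext_of_apply_D {D : A → F}
    (hν : ∀ ν : ∀ i, F →ₗ[A] SymPow A F i, (∀ (i : ℕ) (a : A), ν i (D a) = 0) → ∀ i, ν i = 0)
    {n : ℕ} {f g : SymPow A F 1 →ₗ[A] SymPow A F n}
    (hfg : ∀ a, f (mkS A F ![D a]) = g (mkS A F ![D a])) : f = g := by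
  have hD : ∀ (i : ℕ) (a : A),
      (Pi.single n ((f - g) ∘ₗ toSymPowOne A F) : ∀ i, F →ₗ[A] SymPow A F i) i (D a) = 0 := by
    intro i a
    by_cases hi : i = n
    · subst hi
      simp [toSymPowOne_apply, hfg]
    · simp [Pi.single_eq_of_ne hi]
  have hzero := hν _ hD n
  rw [Pi.single_eq_same] at hzero
  refine symPow_hom_ext fun m => sub_eq_zero.mp ?_
  simpa [mkS_fin_one] using LinearMap.congr_fun hzero (m 0)

variable {mulS : ∀ p q, SymPow A F p →ₗ[A] SymPow A F q →ₗ[A] ∀ k, SymPow A F k}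
  {Φ Ψ : ∀ q p, SymPow A F p →ₗ[A] SymPow A F (p + q)}

/-- In degree `q + 1` the transport identity reads `h'_{q+1} = ∑_j φ_{q+1-j} ∘ h_j`, in which
`φ_q ∘ h₁` is the only term not involving a lower component or `φ_{q+1}` on `S⁰ = A`. -/
theorem apply_hasse_one_eq_of_transports {h h' : ∀ i, A →+ SymPow A F i}
    (hΦ : IsEndoComp A F mulS Φ) (hΨ : IsEndoComp A F mulS Ψ)
    (hΦt : Transports A F Φ h h') (hΨt : Transports A F Ψ h h') {q : ℕ}
    (hlt : ∀ q' < q, Φ q' = Ψ q') (a : A) : Φ q 1 (h 1 a) = Ψ q 1 (h 1 a) := by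
  have hone : (1 : ℕ) ∈ Finset.range (q + 1 + 1) := by simp
  have hterm := Finset.eq_of_sum_eq_sum_of_forall_ne hone
    ((hΦt a (q + 1)).symm.trans (hΨt a (q + 1))) fun j hj hj1 => by
      rcases Nat.eq_zero_or_pos j with rfl | hj0
      · rw [hΦ.2.1 _ (by omega), hΨ.2.1 _ (by omega)]
      · rw [Finset.mem_range] at hj
        rw [hlt _ (by omega)]
  simpa using congrFun hterm (1 + q)

theorem IsEndoComp.eq_succ_of_eq (hΦ : IsEndoComp A F mulS Φ) (hΨ : IsEndoComp A F mulS Ψ)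
    {q p : ℕ} (hlt : ∀ q' < q, Φ q' = Ψ q') (hp : Φ q p = Ψ q p) (hone : Φ q 1 = Ψ q 1) :
    Φ q (p + 1) = Ψ q (p + 1) := by
  have hle : ∀ n, Φ q n = Ψ q n → ∀ q' ≤ q, Φ q' n = Ψ q' n := fun n hn q' hq' =>
    hq'.lt_or_eq.elim (fun h => congrFun (hlt q' h) n) (fun h => h ▸ hn)
  refine symPow_hom_ext fun m => ?_
  have hsplit := (hΦ.2.2 q p 1 (fun i => m i.castSucc) fun _ => m (Fin.last p)).trans <|
    (Finset.sum_congr rfl fun x hx => ?_).trans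
      (hΨ.2.2 q p 1 (fun i => m i.castSucc) fun _ => m (Fin.last p)).symm
  · rw [appendWord_init_last] at hsplit
    simpa using congrFun hsplit (p + 1 + q)
  · have hx := Finset.HasAntidiagonal.mem_antidiagonal.mp hx
    rw [hle p hp x.1 (by omega), hle 1 hone x.2 (by omega)]

end

theorem comparison_unique
    (B : Type) [CommRing B] [Algebra B A] [Module B F]
    (D : Derivation B A F)
    (mulS : ∀ p q, SymPow A F p →ₗ[A] SymPow A F q →ₗ[A] ∀ k, SymPow A F k)
    (hν : ∀ ν : ∀ i, F →ₗ[A] SymPow A F i,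
      (∀ (i : ℕ) (a : A), ν i (D a) = 0) → ∀ i, ν i = 0)
    (h h' : ∀ i, A →+ SymPow A F i)
    (hh : IsHasse A F B (⇑D) mulS h)
    (Φ Ψ : ∀ q p, SymPow A F p →ₗ[A] SymPow A F (p + q))
    (hΦ : IsEndoComp A F mulS Φ) (hΨ : IsEndoComp A F mulS Ψ)
    (hΦt : Transports A F Φ h h') (hΨt : Transports A F Ψ h h') :
    Φ = Ψ := by
  funext q
  induction q using Nat.strong_induction_on with
  | _ q hlt =>
  rcases q.eq_zero_or_pos with rfl | hq
  · funext p
    rw [hΦ.1, hΨ.1]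
  have hone : Φ q 1 = Ψ q 1 := symPowOne_hom_ext_of_apply_D hν fun a => by
    simpa only [hh.2.2.2] using apply_hasse_one_eq_of_transports hΦ hΨ hΦt hΨt hlt a
  funext p
  rcases p.eq_zero_or_pos with rfl | hp
  · rw [hΦ.2.1 q hq, hΨ.2.1 q hq]
  induction p, hp using Nat.le_induction with
  | base => exact hone
  | succ p _ ihp => exact hΦ.eq_succ_of_eq hΨ hlt ihp hone
end
end

section
/- If A is a Noetherian commutative Q-algebra, F a finitely generated projective (locally free) A-module, and D: A → F a derivation such that the submodule generated by D(A) equals F after localization at every associated prime of A, then ν∘D ≠ 0 for every nonzero A-linear map ν: F → Ŝ(F) = Π_{i≥0} S^i(F). -/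
open scoped TensorProduct

noncomputable section

variable (A : Type) [CommRing A]
variable (F : Type) [AddCommGroup F] [Module A F]

/-! Over a Noetherian ring, every nonzero element of a free module has a coordinate whose
annihilator lies in an associated prime of the ring. Projective modules embed into free ones,
so in them no nonzero element is killed locally at every associated prime. Over `ℚ`, symmetrization
exhibits `S^i(F)` as a direct summand of the projective module `T^i(F)`; since `ν i` kills `D(A)`,
which generates `F` locally at the associated primes, every `ν i x` is such an element. -/

theorem eq_zero_of_forall_associatedPrimes_exists_mul_eq_zero {R : Type*} [CommRing R]
    [IsNoetherianRing R] {c : R} (h : ∀ P ∈ associatedPrimes R R, ∃ s ∉ P, s * c = 0) :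
    c = 0 := by
  by_contra hc
  obtain ⟨P, hP, hle⟩ := exists_le_isAssociatedPrime_of_isNoetherianRing R c hc
  obtain ⟨s, hsP, hsc⟩ := h P hP
  exact hsP (hle (Submodule.mem_colon_singleton.mpr hsc))

theorem Module.Projective.eq_zero_of_forall_associatedPrimes_exists_smul_eq_zero
    {R M : Type*} [CommRing R] [IsNoetherianRing R] [AddCommGroup M] [Module R M]
    [Module.Projective R M] {y : M} (h : ∀ P ∈ associatedPrimes R R, ∃ s ∉ P, s • y = 0) :
    y = 0 := by
  obtain ⟨i, hi⟩ := Module.projective_def'.mp ‹Module.Projective R M›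
  have hiy : i y = 0 := Finsupp.ext fun k =>
    eq_zero_of_forall_associatedPrimes_exists_mul_eq_zero fun P hP => by
      obtain ⟨s, hsP, hsy⟩ := h P hP
      exact ⟨s, hsP, by simpa [hsy] using congr($(map_smul i s y) k).symm⟩
  simpa [hiy] using (LinearMap.congr_fun hi y).symm

instance Module.Projective.piTensorProduct {R ι : Type*} [CommRing R] [Finite ι] {M : ι → Type*}
    [∀ i, AddCommGroup (M i)] [∀ i, Module R (M i)] [∀ i, Module.Projective R (M i)] :
    Module.Projective R (⨂[R] i, M i) := by
  choose s hs using fun i => Module.projective_def'.mp (inferInstance : Module.Projective R (M i))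
  have : Module.Free R (⨂[R] i, (M i →₀ R)) :=
    .of_basis (Basis.piTensorProduct fun i => Finsupp.basisSingleOne)
  refine .of_split (PiTensorProduct.map s)
    (PiTensorProduct.map fun i => Finsupp.linearCombination R id) ?_
  rw [← PiTensorProduct.map_comp]
  simp only [hs, PiTensorProduct.map_id]

theorem tprod_sub_tprod_comp_mem_symRel (n : ℕ) (m : Fin n → F) (σ : Equiv.Perm (Fin n)) :
    PiTensorProduct.tprod A m - PiTensorProduct.tprod A (m ∘ σ) ∈ symRel A F n :=
  Submodule.subset_span ⟨m, σ, rfl⟩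

section Symmetrization

variable [Algebra ℚ A]

def symmetrize (n : ℕ) : TPow A F n →ₗ[A] TPow A F n :=
  algebraMap ℚ A (n.factorial : ℚ)⁻¹ •
    ∑ e : Equiv.Perm (Fin n), (PiTensorProduct.reindex A (fun _ => F) e).toLinearMap

theorem symmetrize_tprod (n : ℕ) (m : Fin n → F) :
    symmetrize A F n (PiTensorProduct.tprod A m)
      = algebraMap ℚ A (n.factorial : ℚ)⁻¹ •
          ∑ e : Equiv.Perm (Fin n), PiTensorProduct.tprod A (m ∘ e.symm) := by
  simp [symmetrize, LinearMap.sum_apply, Function.comp_def]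

theorem symmetrize_tprod_comp (n : ℕ) (m : Fin n → F) (σ : Equiv.Perm (Fin n)) :
    symmetrize A F n (PiTensorProduct.tprod A (m ∘ σ))
      = symmetrize A F n (PiTensorProduct.tprod A m) := by
  simp only [symmetrize_tprod]
  congr 1
  exact Fintype.sum_equiv (Equiv.mulRight σ⁻¹) _ _ fun e => by
    simp [Function.comp_def, Equiv.Perm.inv_def, Equiv.Perm.mul_def]

theorem symRel_le_ker_symmetrize (n : ℕ) : symRel A F n ≤ LinearMap.ker (symmetrize A F n) := by
  rw [symRel, Submodule.span_le]
  rintro _ ⟨m, σ, rfl⟩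
  simp [symmetrize_tprod_comp]

theorem mkQ_comp_symmetrize (n : ℕ) :
    (symRel A F n).mkQ ∘ₗ symmetrize A F n = (symRel A F n).mkQ := by
  refine PiTensorProduct.ext (MultilinearMap.ext fun m => ?_)
  have hperm : ∀ e : Equiv.Perm (Fin n), (symRel A F n).mkQ (PiTensorProduct.tprod A (m ∘ e))
      = (symRel A F n).mkQ (PiTensorProduct.tprod A m) := fun e =>
    ((Submodule.Quotient.eq _).mpr (tprod_sub_tprod_comp_mem_symRel A F n m e)).symm
  simp only [LinearMap.compMultilinearMap_apply, LinearMap.coe_comp, Function.comp_apply,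
    symmetrize_tprod, algebraMap_smul, LinearMap.map_smul_of_tower, map_sum, hperm,
    Submodule.mkQ_apply, Finset.sum_const, Finset.card_univ, Fintype.card_perm, Fintype.card_fin]
  rw [← Nat.cast_smul_eq_nsmul ℚ, smul_smul, inv_mul_cancel₀ (by positivity), one_smul]

def symPowSection (n : ℕ) : SymPow A F n →ₗ[A] TPow A F n :=
  (symRel A F n).liftQ (symmetrize A F n) (symRel_le_ker_symmetrize A F n)

theorem mkQ_comp_symPowSection (n : ℕ) :
    (symRel A F n).mkQ ∘ₗ symPowSection A F n = LinearMap.id := by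
  refine Submodule.linearMap_qext _ ?_
  rw [LinearMap.comp_assoc, symPowSection, Submodule.liftQ_mkQ, LinearMap.id_comp]
  exact mkQ_comp_symmetrize A F n

instance [Module.Projective A F] (n : ℕ) : Module.Projective A (SymPow A F n) :=
  .of_split (symPowSection A F n) (symRel A F n).mkQ (mkQ_comp_symPowSection A F n)

end Symmetrization

theorem nondegenerate_of_generating [Algebra ℚ A] [IsNoetherianRing A]
    [Module.Projective A F]
    [Module ℚ F]
    (D : Derivation ℚ A F)
    (hgen : ∀ p ∈ associatedPrimes A A, ∀ x : F,
      ∃ s : A, s ∉ p ∧ s • x ∈ Submodule.span A (Set.range (⇑D))) :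
    ∀ ν : ∀ i, F →ₗ[A] SymPow A F i,
      (∀ (i : ℕ) (a : A), ν i (D a) = 0) → ∀ i, ν i = 0 := by
  intro ν hν i
  have hD : Submodule.span A (Set.range ⇑D) ≤ LinearMap.ker (ν i) :=
    Submodule.span_le.mpr (Set.range_subset_iff.mpr (hν i))
  refine LinearMap.ext fun x => ?_
  refine Module.Projective.eq_zero_of_forall_associatedPrimes_exists_smul_eq_zero (R := A)
    fun P hP => ?_
  obtain ⟨s, hsP, hsx⟩ := hgen P hP x
  exact ⟨s, hsP, by rw [← map_smul]; exact hD hsx⟩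

end
end
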